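/- arXiv:2110.12120 — 5 statements merged into one kernel-verified Lean document; each statement's English description precedes it below -/
import Mathlib

section
/- Let K ⊆ ℝ^n = ℝ^{n_1} × ⋯ × ℝ^{n_N} be a finite set such that every z = (z_1,…,z_N) ∈ K is feasible, i.e., z_i ∈ X_i(z_{-i}) for each i. Then for every u ∈ K, every player index i ∈ {1,…,N}, and every v_i ∈ X_i(u_{-i}), there exists a polynomial map p : ℝ^n → ℝ^{n_i} (each component a real polynomial in the n variables) such that p(u) = v_i and p(x) ∈ X_i(x_{-i}) for every x ∈ K. (Theorem 4.1: when the KKT set is finite, a feasible extension always exists and can be chosen to be a polynomial vector function.) -/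
/-!
A finite set of points in `σ → R` is interpolated by polynomials: for `a ≠ b` an affine
function of one coordinate where they differ separates them, products of these give Lagrange
basis polynomials, and linear combinations of those take any prescribed values. The
feasible extension is the polynomial map interpolating `x ↦ x_i` on `K \ {u}` and `v_i` at `u`;
its values on `K` are feasible because every point of `K` is.
-/

namespace MvPolynomial

variable {σ R : Type*} [Field R]

theorem exists_eval_eq_one_and_eval_eq_zero {a b : σ → R} (hab : a ≠ b) :
    ∃ p : MvPolynomial σ R, eval a p = 1 ∧ eval b p = 0 := by
  obtain ⟨s, hs⟩ := Function.ne_iff.mp hab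
  refine ⟨C (a s - b s)⁻¹ * (X s - C (b s)), ?_, ?_⟩ <;> simp [sub_ne_zero.mpr hs]

theorem exists_lagrange_basis (S : Finset (σ → R)) (a : σ → R) :
    ∃ p : MvPolynomial σ R, eval a p = 1 ∧ ∀ b ∈ S, b ≠ a → eval b p = 0 := by
  classical
  choose! q hq using fun b (hb : b ≠ a) => exists_eval_eq_one_and_eval_eq_zero hb.symm
  refine ⟨∏ b ∈ S.erase a, q b, ?_, fun b hb hba => ?_⟩
  · rw [map_prod]
    exact Finset.prod_eq_one fun b hb => (hq b (Finset.ne_of_mem_erase hb)).1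
  · rw [map_prod]
    exact Finset.prod_eq_zero (Finset.mem_erase.2 ⟨hba, hb⟩) (hq b hba).2

theorem exists_eval_eq_of_finite {S : Set (σ → R)} (hS : S.Finite) (f : (σ → R) → R) :
    ∃ p : MvPolynomial σ R, ∀ a ∈ S, eval a p = f a := by
  classical
  choose δ hδ using exists_lagrange_basis hS.toFinset
  refine ⟨∑ b ∈ hS.toFinset, C (f b) * δ b, fun a ha => ?_⟩
  rw [map_sum, Finset.sum_eq_single a]
  · simp [(hδ a).1]
  · intro b _ hba
    simp [(hδ b).2 a (hS.mem_toFinset.2 ha) (Ne.symm hba)]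
  · exact fun h => absurd (hS.mem_toFinset.2 ha) h

end MvPolynomial

open MvPolynomial in
theorem stmt3_general
    {N : ℕ} {n : Fin N → ℕ}
    (X : ∀ i : Fin N, (∀ j, EuclideanSpace ℝ (Fin (n j))) → Set (EuclideanSpace ℝ (Fin (n i))))
    (K : Set (∀ j, EuclideanSpace ℝ (Fin (n j))))
    (hKfin : K.Finite)
    (hKfeas : ∀ z ∈ K, ∀ i, z i ∈ X i z)
    (u : ∀ j, EuclideanSpace ℝ (Fin (n j))) (hu : u ∈ K)
    (i : Fin N) (v : EuclideanSpace ℝ (Fin (n i))) (hv : v ∈ X i u) :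
    ∃ q : Fin (n i) → MvPolynomial ((j : Fin N) × Fin (n j)) ℝ,
      (WithLp.toLp 2 (fun t => MvPolynomial.eval (fun s => u s.1 s.2) (q t)) : EuclideanSpace ℝ (Fin (n i)))
        = v ∧
      ∀ x ∈ K,
        (WithLp.toLp 2 (fun t => MvPolynomial.eval (fun s => x s.1 s.2) (q t)) : EuclideanSpace ℝ (Fin (n i)))
          ∈ X i x := by
  classical
  let flatten : (∀ j, EuclideanSpace ℝ (Fin (n j))) → (j : Fin N) × Fin (n j) → ℝ :=
    fun x s => x s.1 s.2
  let unflatten : ((j : Fin N) × Fin (n j) → ℝ) → ∀ j, EuclideanSpace ℝ (Fin (n j)) :=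
    fun y j => WithLp.toLp 2 fun t => y ⟨j, t⟩
  let target := Function.update (fun x : ∀ j, EuclideanSpace ℝ (Fin (n j)) => x i) u v
  choose q hq using fun t =>
    exists_eval_eq_of_finite (hKfin.image flatten) fun y => target (unflatten y) t
  have hq_eq : ∀ x ∈ K, (WithLp.toLp 2 fun t => eval (flatten x) (q t)) = target x :=
    fun x hx => by ext t; exact hq t _ (Set.mem_image_of_mem flatten hx)
  refine ⟨q, by simpa [target] using hq_eq u hu, fun x hx => ?_⟩
  rw [hq_eq x hx]
  rcases eq_or_ne x u with rfl | hxu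
  · simpa [target] using hv
  · simpa [target, hxu] using hKfeas x hx i

theorem stmt3
    {N : ℕ} {n : Fin N → ℕ}
    (X : ∀ i : Fin N, (∀ j, EuclideanSpace ℝ (Fin (n j))) → Set (EuclideanSpace ℝ (Fin (n i))))
    (hX : ∀ i x y, (∀ j, j ≠ i → x j = y j) → X i x = X i y)
    (K : Set (∀ j, EuclideanSpace ℝ (Fin (n j))))
    (hKfin : K.Finite)
    (hKfeas : ∀ z ∈ K, ∀ i, z i ∈ X i z)
    (u : ∀ j, EuclideanSpace ℝ (Fin (n j))) (hu : u ∈ K)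
    (i : Fin N) (v : EuclideanSpace ℝ (Fin (n i))) (hv : v ∈ X i u) :
    ∃ q : Fin (n i) → MvPolynomial ((j : Fin N) × Fin (n j)) ℝ,
      (WithLp.toLp 2 (fun t => MvPolynomial.eval (fun s => u s.1 s.2) (q t)) : EuclideanSpace ℝ (Fin (n i)))
        = v ∧
      ∀ x ∈ K,
        (WithLp.toLp 2 (fun t => MvPolynomial.eval (fun s => x s.1 s.2) (q t)) : EuclideanSpace ℝ (Fin (n i)))
          ∈ X i x :=
  stmt3_general X K hKfin hKfeas u hu i v hv
end

section
/- Let K₁ ⊆ ℝ^n and a₁, a₂ : ℝ^n → ℝ with a₂(x) ≥ 0 for all x ∈ K₁. Let z₁,…,z_r ∈ K₁ and μ₁,…,μ_r > 0 satisfy Σ_{j=1}^r μ_j a₂(z_j) = 1, and set v := Σ_{j=1}^r μ_j a₁(z_j). Assume: (i) for every choice of scalars ν₁,…,ν_r ≥ 0 with Σ_j ν_j a₂(z_j) = 1 one has v ≤ Σ_j ν_j a₁(z_j); and (ii) v ≤ a₁(x)/a₂(x) for every x ∈ K₁ with a₂(x) > 0. Then for every index j with a₂(z_j) > 0 (and at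 least one such j exists), the point z_j is a minimizer of a₁/a₂ over {x ∈ K₁ : a₂(x) > 0}, and a₁(z_j)/a₂(z_j) = v. (This is the extraction step of Theorem 5.1: when flat truncation holds, each atom of the optimal truncated moment sequence with positive denominator value is a minimizer of the rational optimization problem.) -/
/-! Every ratio `a₁ (z j) / a₂ (z j)` with `a₂ (z j) > 0` is at least `v` by (ii); it is at most `v`
because the reweighting `ν = (1 + ε) μ - μ j • e j`, with `ε = μ j a₂ (z j)` the atom's share of
the normalisation, is admissible in (i) and has objective `(1 + ε) v - μ j a₁ (z j)`, so (i)
forces `μ j a₁ (z j) ≤ ε v`. -/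

open Matrix

theorem div_le_dotProduct_of_forall_le_reweight {ι : Type*} [Fintype ι] [DecidableEq ι]
    {μ b c : ι → ℝ} (hμ : ∀ k, 0 ≤ μ k) (hμb : μ ⬝ᵥ b = 1)
    (hopt : ∀ ν : ι → ℝ, (∀ k, 0 ≤ ν k) → ν ⬝ᵥ b = 1 → μ ⬝ᵥ c ≤ ν ⬝ᵥ c)
    {j : ι} (hμj : 0 < μ j) (hbj : 0 < b j) :
    c j / b j ≤ μ ⬝ᵥ c := by
  set ε := μ j * b j
  have hε : 0 < ε := mul_pos hμj hbj
  set ν : ι → ℝ := (1 + ε) • μ - Pi.single j (μ j)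
  have hν : ∀ k, 0 ≤ ν k := by
    intro k
    rcases eq_or_ne k j with rfl | hk
    · simp only [ν, Pi.sub_apply, Pi.smul_apply, smul_eq_mul, Pi.single_eq_same]
      nlinarith
    · simp only [ν, Pi.sub_apply, Pi.smul_apply, smul_eq_mul, Pi.single_eq_of_ne hk, sub_zero]
      exact mul_nonneg (by linarith) (hμ k)
  have hνb : ν ⬝ᵥ b = 1 := by
    simp only [ν, sub_dotProduct, smul_dotProduct, single_dotProduct, hμb, smul_eq_mul]
    ring
  have hνc : ν ⬝ᵥ c = (1 + ε) * (μ ⬝ᵥ c) - μ j * c j := by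
    simp only [ν, sub_dotProduct, smul_dotProduct, single_dotProduct, smul_eq_mul]
  have hle : μ j * c j ≤ μ j * (b j * (μ ⬝ᵥ c)) := by
    have := hopt ν hν hνb
    rw [hνc] at this
    linarith
  rw [div_le_iff₀' hbj]
  exact le_of_mul_le_mul_left hle hμj

theorem stmt4 {n r : ℕ} (K₁ : Set (Fin n → ℝ)) (a₁ a₂ : (Fin n → ℝ) → ℝ)
    (ha₂ : ∀ x ∈ K₁, 0 ≤ a₂ x)
    (z : Fin r → (Fin n → ℝ)) (μ : Fin r → ℝ)
    (hz : ∀ j, z j ∈ K₁) (hμ : ∀ j, 0 < μ j)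
    (hsum : ∑ j, μ j * a₂ (z j) = 1)
    (v : ℝ) (hv : v = ∑ j, μ j * a₁ (z j))
    -- (i) optimality among reweightings of the atoms
    (hopt : ∀ ν : Fin r → ℝ, (∀ j, 0 ≤ ν j) → (∑ j, ν j * a₂ (z j)) = 1 →
      v ≤ ∑ j, ν j * a₁ (z j))
    -- (ii) the relaxation value is a lower bound for the true minimum
    (hlb : ∀ x ∈ K₁, 0 < a₂ x → v ≤ a₁ x / a₂ x) :
    (∃ j, 0 < a₂ (z j)) ∧
    ∀ j, 0 < a₂ (z j) →
      a₁ (z j) / a₂ (z j) = v ∧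
      ∀ x ∈ K₁, 0 < a₂ x → a₁ (z j) / a₂ (z j) ≤ a₁ x / a₂ x := by
  refine ⟨?_, fun j hj => ?_⟩
  · obtain ⟨j, -, hj⟩ := Finset.exists_ne_zero_of_sum_ne_zero (hsum.trans_ne one_ne_zero)
    exact ⟨j, (ha₂ _ (hz j)).lt_of_ne' (right_ne_zero_of_mul hj)⟩
  have hratio : a₁ (z j) / a₂ (z j) = v := by
    subst hv
    refine le_antisymm ?_ (hlb _ (hz j) hj)
    exact div_le_dotProduct_of_forall_le_reweight (fun k => (hμ k).le) hsum hopt (hμ j) hj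
  exact ⟨hratio, fun x hx hax => hratio ▸ hlb x hx hax⟩
end

section
/- Let W ⊆ ℝ^m, let b : W → ℝ and a, c : W → ℝ^{s} be functions with c_j(w) > 0 for all w ∈ W and all j, and let d ∈ ℝ^{s} be a constant vector with all entries positive. For w ∈ W define the simplex-type set X(w) := { y ∈ ℝ^{s} : dᵀy ≤ b(w) and c_j(w)·y_j ≥ a_j(w) for every j }. Given w₀ ∈ W and v ∈ X(w₀), there exists a vector μ ∈ ℝ^{s} with μ ≥ 0 and Σ_j d_j μ_j ≤ 1 such that the map p(w) := ( μ_j·(b(w) − Σ_k d_k a_k(w)/c_k(w)) + a_j(w)/c_j(w) )_{j=1}^{s} satisfies p(w₀) = v and p(w) ∈ X(w) for every w ∈ W with b(w) ≥ Σ_k d_k a_k(w)/c_k(w) (i.e., whenever X(w) is nonempty). -/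
/-! Dividing the lower bounds by `c` turns `X(w)` into the shifted simplex
`{y : d ⬝ y ≤ b, ℓ ≤ y}` with `ℓ = a / c`, whose points are `ℓ + r μ` with `r = b - d ⬝ ℓ`
and `μ` in the standard `d`-simplex `{μ ≥ 0, d ⬝ μ ≤ 1}`. Taking `μ = (v - ℓ(w₀)) / r(w₀)`
reproduces `v` at `w₀`; when `r(w₀) = 0` the simplex is the single point `ℓ(w₀)`, so
`v = ℓ(w₀)` and `μ = 0` does it. -/

open Finset

variable {ι : Type*} [Fintype ι] {d ℓ v μ : ι → ℝ} {b : ℝ}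

lemma sum_mul_add_le_of_mem_simplex (hμ : ∀ j, 0 ≤ μ j) (hμd : ∑ j, d j * μ j ≤ 1)
    (hℓ : ∑ k, d k * ℓ k ≤ b) :
    ∑ j, d j * (μ j * (b - ∑ k, d k * ℓ k) + ℓ j) ≤ b ∧
      ∀ j, ℓ j ≤ μ j * (b - ∑ k, d k * ℓ k) + ℓ j := by
  have hr : 0 ≤ b - ∑ k, d k * ℓ k := sub_nonneg.mpr hℓ
  refine ⟨?_, fun j => le_add_of_nonneg_left (mul_nonneg (hμ j) hr)⟩
  calc ∑ j, d j * (μ j * (b - ∑ k, d k * ℓ k) + ℓ j)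
      = (∑ j, d j * μ j) * (b - ∑ k, d k * ℓ k) + ∑ k, d k * ℓ k := by
        rw [sum_mul, ← sum_add_distrib]
        exact sum_congr rfl fun j _ => by ring
    _ ≤ 1 * (b - ∑ k, d k * ℓ k) + ∑ k, d k * ℓ k := by gcongr
    _ = b := by ring

lemma eq_of_le_of_sum_mul_le (hd : ∀ j, 0 < d j) (hℓv : ∀ j, ℓ j ≤ v j)
    (hsum : ∑ j, d j * v j ≤ ∑ j, d j * ℓ j) : v = ℓ := by
  have hle : ∀ j ∈ univ, d j * ℓ j ≤ d j * v j := fun j _ =>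
    mul_le_mul_of_nonneg_left (hℓv j) (hd j).le
  have heq := (sum_eq_sum_iff_of_le hle).mp (le_antisymm (sum_le_sum hle) hsum)
  funext j
  exact (mul_left_cancel₀ (hd j).ne' (heq j (mem_univ j))).symm

lemma exists_mem_simplex_mul_add_eq (hd : ∀ j, 0 < d j) (hℓv : ∀ j, ℓ j ≤ v j)
    (hv : ∑ j, d j * v j ≤ b) :
    ∃ μ : ι → ℝ, (∀ j, 0 ≤ μ j) ∧ ∑ j, d j * μ j ≤ 1 ∧
      ∀ j, μ j * (b - ∑ k, d k * ℓ k) + ℓ j = v j := by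
  have hℓ : ∑ k, d k * ℓ k ≤ ∑ j, d j * v j :=
    sum_le_sum fun j _ => mul_le_mul_of_nonneg_left (hℓv j) (hd j).le
  have hsum : ∑ j, d j * (v j - ℓ j) = ∑ j, d j * v j - ∑ k, d k * ℓ k := by
    rw [← sum_sub_distrib]
    exact sum_congr rfl fun j _ => by ring
  set r := b - ∑ k, d k * ℓ k
  rcases (show 0 ≤ r by linarith).eq_or_lt with hr | hr
  · have hvℓ : v = ℓ := eq_of_le_of_sum_mul_le hd hℓv (by linarith)
    exact ⟨0, fun _ => le_rfl, by simp, fun j => by simp [hvℓ]⟩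
  refine ⟨fun j => (v j - ℓ j) / r, fun j => div_nonneg (sub_nonneg.mpr (hℓv j)) hr.le,
    ?_, fun j => by field_simp; ring⟩
  calc ∑ j, d j * ((v j - ℓ j) / r) = (∑ j, d j * (v j - ℓ j)) / r := by
        rw [sum_div]
        exact sum_congr rfl fun j _ => (mul_div_assoc _ _ _).symm
    _ ≤ 1 := by rw [div_le_one hr, hsum]; linarith

theorem stmt8 {m s : ℕ} (W : Set (Fin m → ℝ))
    (b : (Fin m → ℝ) → ℝ) (a c : (Fin m → ℝ) → Fin s → ℝ) (d : Fin s → ℝ)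
    (hc : ∀ w ∈ W, ∀ j, 0 < c w j) (hd : ∀ j, 0 < d j)
    (w₀ : Fin m → ℝ) (hw₀ : w₀ ∈ W)
    (v : Fin s → ℝ)
    (hv : (∑ j, d j * v j) ≤ b w₀ ∧ ∀ j, a w₀ j ≤ c w₀ j * v j) :
    ∃ μ : Fin s → ℝ, (∀ j, 0 ≤ μ j) ∧ (∑ j, d j * μ j) ≤ 1 ∧
      -- p(w₀) = v
      (∀ j, μ j * (b w₀ - ∑ k, d k * (a w₀ k / c w₀ k)) + a w₀ j / c w₀ j = v j) ∧
      -- p(w) ∈ X(w) whenever X(w) is nonempty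
      ∀ w ∈ W, (∑ k, d k * (a w k / c w k)) ≤ b w →
        (∑ j, d j * (μ j * (b w - ∑ k, d k * (a w k / c w k)) + a w j / c w j)) ≤ b w ∧
        ∀ j, a w j ≤ c w j * (μ j * (b w - ∑ k, d k * (a w k / c w k)) + a w j / c w j) := by
  have hℓv : ∀ j, a w₀ j / c w₀ j ≤ v j := fun j =>
    (div_le_iff₀' (hc w₀ hw₀ j)).mpr (hv.2 j)
  obtain ⟨μ, hμ, hμd, hμv⟩ := exists_mem_simplex_mul_add_eq hd hℓv hv.1
  refine ⟨μ, hμ, hμd, hμv, fun w hw hXw => ?_⟩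
  obtain ⟨hsum, hlower⟩ := sum_mul_add_le_of_mem_simplex hμ hμd hXw
  exact ⟨hsum, fun j => (div_le_iff₀' (hc w hw j)).mp (hlower j)⟩
end

section
/- Let W ⊆ ℝ^m, let a, c : W → ℝ^{s} and R : W → ℝ be functions with a_j(w) ≠ 0 for all w ∈ W and all j, and for w ∈ W define the ball-type set X(w) := { y ∈ ℝ^{s} : Σ_{j=1}^{s} ( a_j(w)·y_j − c_j(w) )² ≤ R(w)² }. Given w₀ ∈ W with R(w₀) ≥ 0 and v ∈ X(w₀), there exist a scalar μ ∈ [0,1] and a vector s ∈ ℝ^{s} with ‖s‖ = 1 such that the map p(w) := ( ( c_j(w) + s_j·μ·R(w) ) / a_j(w) )_{j=1}^{s} satisfies p(w₀) = v and p(w) ∈ X(w) for every w ∈ W. -/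
/-! Write the offset `a(w₀)⊙v − c(w₀)` as `μ R(w₀) s` with `s` a unit vector and `μ ∈ [0, 1]`.
Then `a(w)⊙p(w) − c(w) = μ R(w) s` for every `w`, whose squared norm `μ² R(w)²` is at most `R(w)²`. -/

open Finset

theorem exists_unit_mul_scale_of_sum_sq_le {ι : Type*} [Fintype ι] [Nonempty ι] (d : ι → ℝ) {r : ℝ}
    (hr : 0 ≤ r) (hd : ∑ j, d j ^ 2 ≤ r ^ 2) :
    ∃ (μ : ℝ) (u : ι → ℝ), 0 ≤ μ ∧ μ ≤ 1 ∧ ∑ j, u j ^ 2 = 1 ∧ ∀ j, u j * μ * r = d j := by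
  classical
  have hsum : 0 ≤ ∑ j, d j ^ 2 := sum_nonneg fun j _ => sq_nonneg _
  rcases hsum.eq_or_lt with hzero | hpos
  · obtain ⟨i⟩ := ‹Nonempty ι›
    have hd0 : ∀ j, d j = 0 := fun j =>
      pow_eq_zero_iff two_ne_zero |>.mp <|
        (sum_eq_zero_iff_of_nonneg fun j _ => sq_nonneg (d j)).mp hzero.symm j (mem_univ j)
    refine ⟨0, Pi.single i 1, le_rfl, zero_le_one, ?_, fun j => by simp [hd0 j]⟩
    simp [Pi.single_apply]
  · set t := √(∑ j, d j ^ 2)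
    have ht : 0 < t := Real.sqrt_pos.mpr hpos
    have ht2 : t ^ 2 = ∑ j, d j ^ 2 := Real.sq_sqrt hsum
    have htr : t ≤ r := (Real.sqrt_le_sqrt hd).trans_eq (Real.sqrt_sq hr)
    have hr0 : 0 < r := ht.trans_le htr
    refine ⟨t / r, fun j => d j / t, by positivity, (div_le_one hr0).mpr htr, ?_, fun j => ?_⟩
    · simp_rw [div_pow, ← sum_div, ← ht2]
      exact div_self (by positivity)
    · field_simp

theorem mul_div_add_sub_cancel {a : ℝ} (ha : a ≠ 0) (c x : ℝ) : a * ((c + x) / a) - c = x := by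
  rw [mul_div_cancel₀ _ ha, add_sub_cancel_left]

theorem sum_sq_mul_div_add_sub_le {ι : Type*} [Fintype ι] {a : ι → ℝ} (ha : ∀ j, a j ≠ 0)
    (c u : ι → ℝ) (hu : ∑ j, u j ^ 2 = 1) {μ : ℝ} (hμ₀ : 0 ≤ μ) (hμ₁ : μ ≤ 1) (r : ℝ) :
    ∑ j, (a j * ((c j + u j * μ * r) / a j) - c j) ^ 2 ≤ r ^ 2 :=
  calc ∑ j, (a j * ((c j + u j * μ * r) / a j) - c j) ^ 2
      = (μ * r) ^ 2 * ∑ j, u j ^ 2 := by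
        rw [mul_sum]
        exact sum_congr rfl fun j _ => by rw [mul_div_add_sub_cancel (ha j)]; ring
    _ = μ ^ 2 * r ^ 2 := by rw [hu]; ring
    _ ≤ 1 * r ^ 2 := by gcongr; exact pow_le_one₀ hμ₀ hμ₁
    _ = r ^ 2 := one_mul _

theorem stmt9 {m s : ℕ} (hs : 0 < s) (W : Set (Fin m → ℝ))
    (a c : (Fin m → ℝ) → Fin s → ℝ) (R : (Fin m → ℝ) → ℝ)
    (ha : ∀ w ∈ W, ∀ j, a w j ≠ 0)
    (w₀ : Fin m → ℝ) (hw₀ : w₀ ∈ W) (hR : 0 ≤ R w₀)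
    (v : Fin s → ℝ)
    (hv : (∑ j, (a w₀ j * v j - c w₀ j) ^ 2) ≤ (R w₀) ^ 2) :
    ∃ (μ : ℝ) (sv : Fin s → ℝ), 0 ≤ μ ∧ μ ≤ 1 ∧ (∑ j, (sv j) ^ 2) = 1 ∧
      -- p(w₀) = v
      (∀ j, (c w₀ j + sv j * μ * R w₀) / a w₀ j = v j) ∧
      -- p(w) ∈ X(w) for every w ∈ W
      ∀ w ∈ W,
        (∑ j, (a w j * ((c w j + sv j * μ * R w) / a w j) - c w j) ^ 2) ≤ (R w) ^ 2 := by
  have : Nonempty (Fin s) := ⟨⟨0, hs⟩⟩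
  obtain ⟨μ, u, hμ₀, hμ₁, hu, hdecomp⟩ := exists_unit_mul_scale_of_sum_sq_le _ hR hv
  refine ⟨μ, u, hμ₀, hμ₁, hu, fun j => ?_, fun w hw =>
    sum_sq_mul_div_add_sub_le (ha w hw) (c w) u hu hμ₀ hμ₁ (R w)⟩
  rw [hdecomp, add_sub_cancel, mul_div_cancel_left₀ _ (ha w₀ hw₀ j)]
end

section
/- Let T ⊆ ℝ^n be a compact set and d a positive integer. For u ∈ ℝ^n let [u]_d ∈ ℝ^{|ℕ_d^n|} denote the vector of all monomials u^α with |α| ≤ d (ordered in a fixed way, with the constant monomial 1 as a coordinate). Then the moment cone ℛ_d(T) := { Σ_{i=1}^{M} λ_i [u_i]_d : u_i ∈ T, λ_i ≥ 0, M ∈ ℕ } is a closed convex cone in ℝ^{|ℕ_d^n|}. -/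
/- STATEMENT 14: for compact T ⊆ ℝ^n and d > 0, the moment cone
ℛ_d(T) = { Σ λ_i [u_i]_d : u_i ∈ T, λ_i ≥ 0 } is a closed convex cone. -/

/-- The vector of all monomials u^α with |α| ≤ d of a point u ∈ ℝ^n. -/
noncomputable def monVec (n d : ℕ) (u : Fin n → ℝ) :
    {α : Fin n →₀ ℕ // (α.sum fun _ k => k) ≤ d} → ℝ :=
  fun α => ∏ i, u i ^ (α.1 i)

/-- The moment cone ℛ_d(T). -/
def MomentCone (n d : ℕ) (T : Set (Fin n → ℝ)) :
    Set ({α : Fin n →₀ ℕ // (α.sum fun _ k => k) ≤ d} → ℝ) :=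
  {y | ∃ (M : ℕ) (lam : Fin M → ℝ) (pts : Fin M → Fin n → ℝ),
    (∀ i, 0 ≤ lam i) ∧ (∀ i, pts i ∈ T) ∧ y = ∑ i, lam i • monVec n d (pts i)}

/-!
The moment cone is the conic hull of the compact set `K = [T]_d`, which lies in the hyperplane
where the constant coordinate is `1`. So a point of the cone with constant coordinate `t` is `0`
or lies in `t • conv K`, and the points of the cone with constant coordinate below `R` lie in
`{0} ∪ [0, R] • conv K`, a compact subset of the cone: by Carathéodory, `conv K` is a continuous
image of a compact set. The open half-spaces `{constant coordinate < R}` cover the space, so the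
cone is closed.
-/

open Set Module Pointwise

section ConicHull

variable {E : Type*} [AddCommGroup E] [Module ℝ E] {K : Set E} {ℓ : E →ₗ[ℝ] ℝ}

theorem mem_insert_zero_Icc_smul_convexHull_of_mem_hull (hℓ : ∀ x ∈ K, ℓ x = 1) {y : E}
    (hy : y ∈ PointedCone.hull ℝ K) : y ∈ insert 0 (Icc 0 (ℓ y) • convexHull ℝ K) := by
  obtain ⟨M, c, x, rfl⟩ := Submodule.mem_span_set'.1 hy
  simp only [← Nonneg.coe_smul]
  have hℓy : ℓ (∑ i, (c i : ℝ) • (x i : E)) = ∑ i, (c i : ℝ) := by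
    simp only [map_sum, map_smul, hℓ _ (x _).2, smul_eq_mul, mul_one]
  rcases (Finset.sum_nonneg fun i _ => (c i).2).eq_or_lt with hzero | hpos
  · have hc : ∀ i, (c i : ℝ) = 0 := fun i =>
      (Finset.sum_eq_zero_iff_of_nonneg fun i _ => (c i).2).1 hzero.symm i (Finset.mem_univ i)
    exact Or.inl (Finset.sum_eq_zero fun i _ => by rw [hc, zero_smul])
  · refine mem_insert_of_mem _ ⟨_, ⟨(Finset.sum_nonneg fun i _ => (c i).2), hℓy.ge⟩, _,
      Finset.centerMass_mem_convexHull _ (fun i _ => (c i).2) hpos fun i _ => (x i).2, ?_⟩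
    dsimp only
    rw [Finset.centerMass, smul_smul, mul_inv_cancel₀ hpos.ne', one_smul]

variable [TopologicalSpace E] [IsTopologicalAddGroup E] [ContinuousSMul ℝ E]
  [FiniteDimensional ℝ E]

theorem IsCompact.convexHull (hK : IsCompact K) : IsCompact (_root_.convexHull ℝ K) := by
  -- Carathéodory: `finrank ℝ E + 1` points of `K` suffice.
  have hcover : _root_.convexHull ℝ K = ⋃ k : Fin (finrank ℝ E + 2),
      (fun p : (Fin k → ℝ) × (Fin k → E) => ∑ i, p.1 i • p.2 i) ''
        (stdSimplex ℝ (Fin k) ×ˢ univ.pi fun _ => K) := by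
    refine Subset.antisymm (fun x hx => ?_) (iUnion_subset fun k => ?_)
    · obtain ⟨ι, _, z, w, hzK, hz, hw, hw1, rfl⟩ := eq_pos_convex_span_of_mem_convexHull hx
      have hcard : Fintype.card ι < finrank ℝ E + 2 :=
        Nat.lt_succ_of_le (hz.card_le_finrank_succ.trans (by grw [Submodule.finrank_le]))
      set e := Fintype.equivFin ι
      refine mem_iUnion.2 ⟨⟨_, hcard⟩, (w ∘ e.symm, z ∘ e.symm), ⟨⟨fun i => (hw _).le, ?_⟩,
        fun i _ => hzK (mem_range_self _)⟩, ?_⟩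
      · exact (e.symm.sum_comp w).trans hw1
      · exact e.symm.sum_comp (fun i => w i • z i)
    · rintro _ ⟨⟨w, z⟩, ⟨⟨hw0, hw1⟩, hzK⟩, rfl⟩
      exact (convex_convexHull ℝ K).sum_mem (fun i _ => hw0 i) hw1
        fun i _ => subset_convexHull ℝ K (hzK i (mem_univ i))
  rw [hcover]
  exact isCompact_iUnion fun k =>
    ((isCompact_stdSimplex ℝ _).prod (isCompact_univ_pi fun _ => hK)).image
    (continuous_finsetSum _ fun i _ => ((continuous_apply i).comp continuous_fst).smul
      ((continuous_apply i).comp continuous_snd))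

theorem isClosed_hull_of_isCompact [T2Space E] (hK : IsCompact K) (hℓ : ∀ x ∈ K, ℓ x = 1) :
    IsClosed (PointedCone.hull ℝ K : Set E) := by
  have hsub : ∀ R : ℝ, insert 0 (Icc 0 R • convexHull ℝ K) ⊆ PointedCone.hull ℝ K := by
    rintro R _ (rfl | ⟨t, ht, x, hx, rfl⟩)
    · exact zero_mem _
    · exact Submodule.smul_mem _ ⟨t, ht.1⟩
        (convexHull_min PointedCone.subset_hull (PointedCone.convex _) hx)
  have hclosed : ∀ R : ℝ, IsClosed (insert 0 (Icc 0 R • convexHull ℝ K)) := fun R =>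
    ((isCompact_Icc.smul_set hK.convexHull).insert 0).isClosed
  refine closure_subset_iff_isClosed.1 fun y hy => hsub (ℓ y + 1) ?_
  have hy' : y ∈ closure (PointedCone.hull ℝ K ∩ {z | ℓ z < ℓ y + 1}) := by
    rw [inter_comm]
    exact (isOpen_lt ℓ.continuous_of_finiteDimensional continuous_const).inter_closure
      ⟨lt_add_one (ℓ y), hy⟩
  refine (hclosed _).closure_subset_iff.2 ?_ hy'
  rintro z ⟨hz, hzy⟩
  exact insert_subset_insert (smul_subset_smul_right (Icc_subset_Icc_right hzy.le))
    (mem_insert_zero_Icc_smul_convexHull_of_mem_hull hℓ hz)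

end ConicHull

instance {n d : ℕ} : Finite {α : Fin n →₀ ℕ // (α.sum fun _ k => k) ≤ d} :=
  (Finsupp.finite_of_degree_le d).to_subtype

theorem continuous_monVec {n d : ℕ} : Continuous (monVec n d) :=
  continuous_pi fun _ => continuous_finsetProd _ fun i _ => (continuous_apply i).pow _

theorem monVec_apply_zero {n d : ℕ} (u : Fin n → ℝ) : monVec n d u ⟨0, by simp⟩ = 1 := by
  simp [monVec]

theorem momentCone_eq_hull (n d : ℕ) (T : Set (Fin n → ℝ)) :
    MomentCone n d T = PointedCone.hull ℝ (monVec n d '' T) := by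
  ext y
  simp only [SetLike.mem_coe, Submodule.mem_span_set']
  constructor
  · rintro ⟨M, lam, pts, hlam, hpts, rfl⟩
    exact ⟨M, fun i => ⟨lam i, hlam i⟩, fun i => ⟨_, mem_image_of_mem _ (hpts i)⟩, rfl⟩
  · rintro ⟨M, c, x, rfl⟩
    choose pts hpts hx using fun i => (x i).2
    exact ⟨M, fun i => c i, pts, fun i => (c i).2, hpts, by simp [hx]⟩

theorem stmt14_general {n d : ℕ} (T : Set (Fin n → ℝ)) (hT : IsCompact T) :
    IsClosed (MomentCone n d T) ∧ Convex ℝ (MomentCone n d T) ∧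
    ∀ c : ℝ, 0 ≤ c → ∀ y ∈ MomentCone n d T, c • y ∈ MomentCone n d T := by
  rw [momentCone_eq_hull]
  have hconst : ∀ v ∈ monVec n d '' T, LinearMap.proj (R := ℝ) ⟨0, by simp⟩ v = 1 := by
    rintro _ ⟨u, -, rfl⟩
    exact monVec_apply_zero u
  exact ⟨isClosed_hull_of_isCompact (hT.image continuous_monVec) hconst, PointedCone.convex _,
    fun c hc y hy => Submodule.smul_mem _ ⟨c, hc⟩ hy⟩

theorem stmt14 {n d : ℕ} (hd : 0 < d) (T : Set (Fin n → ℝ)) (hT : IsCompact T) :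
    IsClosed (MomentCone n d T) ∧ Convex ℝ (MomentCone n d T) ∧
    ∀ c : ℝ, 0 ≤ c → ∀ y ∈ MomentCone n d T, c • y ∈ MomentCone n d T :=
  stmt14_general T hT
end
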